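/- Let 𝔇 ≥ 1 be an integer, p an odd prime not dividing 𝔇 such that −𝔇 is NOT a square modulo p, and x, y, n integers with p | n. Then the number of quadruples (c₁, c₂, d₁, d₂) ∈ (ℤ/pℤ)⁴ whose associated pair (c, d) in R = ℤ[√−𝔇]/(p) is unimodular and which satisfy A·x² + B·y² + C·x + D·y + E ≡ n (mod p) equals p³ + p² − p − 1 = (p + 1)(p² − 1); consequently this count divided by the total number p⁴ − 1 of unimodular pairs equals (p + 1)/(p² + 1). Here A = c₁² + 𝔇c₂², B = 𝔇A, C = 2(c₁d₁ + 𝔇c₂d₂), D = 2𝔇(c₁d₂ − c₂d₁), E = A + d₁² + 𝔇d₂². -/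

import Mathlib

/-- The ring `ℤ[√−𝔇]`, modelled as `ℤ[X]/(X² + 𝔇)`. -/
abbrev ZsqrtNeg (𝔇 : ℕ) : Type := AdjoinRoot ((Polynomial.X : Polynomial ℤ) ^ 2 + Polynomial.C (𝔇 : ℤ))

/-- The quotient ring `R = ℤ[√−𝔇]/(p)`. -/
abbrev Rmod (𝔇 p : ℕ) : Type := ZsqrtNeg 𝔇 ⧸ Ideal.span {(p : ZsqrtNeg 𝔇)}

/-- The image of `u + v√−𝔇` in `R = ℤ[√−𝔇]/(p)`. -/
noncomputable def toRmod (𝔇 p : ℕ) (u v : ℤ) : Rmod 𝔇 p :=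
  Ideal.Quotient.mk (Ideal.span {(p : ZsqrtNeg 𝔇)})
    ((u : ZsqrtNeg 𝔇) + (v : ZsqrtNeg 𝔇) * AdjoinRoot.root _)

/-- A quadruple `(c₁, c₂, d₁, d₂) ∈ (ℤ/pℤ)⁴` is unimodular if the associated pair
`(c₁ + c₂√−𝔇, d₁ + d₂√−𝔇)` in `R = ℤ[√−𝔇]/(p)` admits `a, b ∈ R` with `a·d − b·c = 1`. -/
def IsUnimodular (𝔇 p : ℕ) (v : ZMod p × ZMod p × ZMod p × ZMod p) : Prop :=
  ∃ a b : Rmod 𝔇 p,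
    a * toRmod 𝔇 p (v.2.2.1.val : ℤ) (v.2.2.2.val : ℤ)
      - b * toRmod 𝔇 p (v.1.val : ℤ) (v.2.1.val : ℤ) = 1

/-- The congruence `A x² + B y² + C x + D y + E = n` in `ℤ/pℤ` for the quadruple
`v = (c₁, c₂, d₁, d₂)`. -/
def QuadCongr (𝔇 p : ℕ) (x y n : ℤ) (v : ZMod p × ZMod p × ZMod p × ZMod p) : Prop :=
  (v.1 ^ 2 + (𝔇 : ZMod p) * v.2.1 ^ 2) * (x : ZMod p) ^ 2
    + ((𝔇 : ZMod p) * (v.1 ^ 2 + (𝔇 : ZMod p) * v.2.1 ^ 2)) * (y : ZMod p) ^ 2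
    + (2 * (v.1 * v.2.2.1 + (𝔇 : ZMod p) * v.2.1 * v.2.2.2)) * (x : ZMod p)
    + (2 * (𝔇 : ZMod p) * (v.1 * v.2.2.2 - v.2.1 * v.2.2.1)) * (y : ZMod p)
    + ((v.1 ^ 2 + (𝔇 : ZMod p) * v.2.1 ^ 2) + v.2.2.1 ^ 2 + (𝔇 : ZMod p) * v.2.2.2 ^ 2)
    = (n : ZMod p)

/-!
Put `K = 𝔽_p[√−𝔇]`, a field because `−𝔇` is not a square mod `p`, and read a quadruple as the
pair `c = c₁ + c₂√−𝔇`, `d = d₁ + d₂√−𝔇` in `K`. Since `R` is nonzero and `c₁ + c₂√−𝔇` is invertible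
in `R` as soon as `c₁² + 𝔇c₂² ≢ 0`, a pair is unimodular exactly when `(c, d) ≠ 0`. With
`z = x + y√−𝔇` the congruence reads `N(c) + N(cz + d) = n = 0`; the norm form is anisotropic, so
this forces `c ≠ 0`, and after the shear `d ↦ cz + d` the count is `∑_{c ≠ 0} #{d | N(d) = −N(c)}`.
The norm `K → 𝔽_p` is multiplicative and onto (every element of `𝔽_p` is `r² + 𝔇s²`), so all
fibres over `𝔽_pˣ` have the same size, which is `(p² − 1)/(p − 1) = p + 1`.
-/

open Finset

theorem FiniteField.odd_card_of_not_isSquare {F : Type*} [Field F] [Fintype F] {a : F}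
    (ha : ¬IsSquare a) : Fintype.card F % 2 = 1 :=
  FiniteField.odd_card_of_char_ne_two fun h2 => ha (FiniteField.isSquare_of_char_two h2 a)

namespace QuadraticAlgebra

instance {R : Type*} [Fintype R] {a b : R} : Fintype (QuadraticAlgebra R a b) :=
  Fintype.ofEquiv _ (equivProd a b).symm

theorem card_eq {R : Type*} [Fintype R] (a b : R) :
    Fintype.card (QuadraticAlgebra R a b) = Fintype.card R ^ 2 := by
  rw [Fintype.card_congr (equivProd a b), Fintype.card_prod, sq]

variable {F : Type*} [Field F] {a : F}

theorem norm_surjective [Fintype F] (ha : a ≠ 0) (hF : Fintype.card F % 2 = 1) :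
    Function.Surjective (norm : QuadraticAlgebra F a 0 → F) := by
  intro t
  open Polynomial in
  obtain ⟨r, s, h⟩ := FiniteField.exists_root_sum_quadratic (f := X ^ 2 - C t) (g := -C a * X ^ 2)
    (by compute_degree!) (by compute_degree!) hF
  refine ⟨⟨r, s⟩, ?_⟩
  simp only [eval_sub, eval_pow, eval_X, eval_C, eval_mul, eval_neg] at h
  rw [norm_def]
  linear_combination h

theorem not_isSquare_of_forall_sq_ne [Fact (∀ r, r ^ 2 ≠ a + 0 * r)] : ¬IsSquare a := by
  rintro ⟨r, rfl⟩
  exact Fact.out (p := ∀ s, s ^ 2 ≠ r * r + 0 * s) r (by ring)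

theorem norm_inv {b : F} [Fact (∀ r, r ^ 2 ≠ a + b * r)] (z : QuadraticAlgebra F a b) :
    norm z⁻¹ = (norm z)⁻¹ := by
  rcases eq_or_ne z 0 with rfl | hz
  · simp
  · exact eq_inv_of_mul_eq_one_right (by rw [← map_mul, mul_inv_cancel₀ hz, map_one])

variable [Fintype F] [DecidableEq F] [Fact (∀ r, r ^ 2 ≠ a + 0 * r)]

theorem card_norm_fiber_eq {s t : F} (hs : s ≠ 0) (ht : t ≠ 0) :
    #{z : QuadraticAlgebra F a 0 | norm z = s} = #{z : QuadraticAlgebra F a 0 | norm z = t} := by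
  have ha : ¬IsSquare a := not_isSquare_of_forall_sq_ne
  obtain ⟨w, hw⟩ := norm_surjective (a := a) (by rintro rfl; exact ha .zero)
    (FiniteField.odd_card_of_not_isSquare ha) (t / s)
  have hw0 : w ≠ 0 := by rintro rfl; exact div_ne_zero ht hs (by simpa using hw.symm)
  refine card_nbij' (w * ·) (w⁻¹ * ·) ?_ ?_ ?_ ?_
  · intro z hz
    simp only [coe_filter, mem_univ, true_and, Set.mem_ofPred_eq] at hz ⊢
    rw [map_mul, hw, hz, div_mul_cancel₀ _ hs]
  · intro z hz
    simp only [coe_filter, mem_univ, true_and, Set.mem_ofPred_eq] at hz ⊢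
    rw [map_mul, norm_inv, hw, hz, inv_div, div_mul_cancel₀ _ ht]
  · intro z _
    simp [inv_mul_cancel_left₀ hw0]
  · intro z _
    simp [mul_inv_cancel_left₀ hw0]

theorem card_norm_fiber {t : F} (ht : t ≠ 0) :
    #{z : QuadraticAlgebra F a 0 | norm z = t} = Fintype.card F + 1 := by
  have hsum := card_eq_sum_card_fiberwise (s := univ) (t := univ)
    (f := (norm : QuadraticAlgebra F a 0 → F)) (fun _ _ => mem_univ _)
  rw [← add_sum_erase _ _ (mem_univ 0),
    sum_congr rfl fun s hs => card_norm_fiber_eq (ne_of_mem_erase hs) ht] at hsum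
  simp only [norm_eq_zero_iff_eq_zero, filter_eq', mem_univ, if_true, card_singleton, sum_const,
    card_erase_of_mem, card_univ, smul_eq_mul, card_eq] at hsum
  obtain ⟨m, hm⟩ : ∃ m, Fintype.card F = m + 2 :=
    ⟨Fintype.card F - 2, by have := Fintype.one_lt_card (α := F); omega⟩
  rw [hm, show m + 2 - 1 = m + 1 by omega] at hsum
  rw [hm]
  exact Nat.eq_of_mul_eq_mul_left m.succ_pos (by linarith)

theorem card_norm_add_norm_mul_add_eq_zero (z : QuadraticAlgebra F a 0) :
    #{w : QuadraticAlgebra F a 0 × QuadraticAlgebra F a 0 |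
      w.1 ≠ 0 ∧ norm w.1 + norm (w.1 * z + w.2) = 0} =
      (Fintype.card F ^ 2 - 1) * (Fintype.card F + 1) := by
  rw [card_filter, Fintype.sum_prod_type]
  simp only [← card_filter]
  rw [← sum_erase _ (a := 0) (by simp), sum_congr rfl fun c hc => ?_, sum_const,
    card_erase_of_mem (mem_univ _), card_univ, card_eq, smul_eq_mul]
  have hc : c ≠ 0 := ne_of_mem_erase hc
  rw [← card_norm_fiber (a := a) (neg_ne_zero.mpr (norm_eq_zero_iff_eq_zero.not.mpr hc))]
  refine card_equiv (Equiv.addLeft (c * z)) fun d => ?_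
  simp only [mem_filter, mem_univ, true_and, ne_eq, hc, not_false_eq_true,
    Equiv.coe_addLeft]
  rw [eq_neg_iff_add_eq_zero, add_comm]

end QuadraticAlgebra

abbrev ZModSqrtNeg (𝔇 p : ℕ) : Type := QuadraticAlgebra (ZMod p) (-(𝔇 : ZMod p)) 0

section Rmod

variable (𝔇 p : ℕ)

theorem toRmod_eq (u v : ℤ) : toRmod 𝔇 p u v = u + v * toRmod 𝔇 p 0 1 := by
  simp [toRmod]

theorem toRmod_zero_one_sq : toRmod 𝔇 p 0 1 ^ 2 = -𝔇 := by
  have h := congrArg (Ideal.Quotient.mk (Ideal.span {(p : ZsqrtNeg 𝔇)}))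
    (AdjoinRoot.eval₂_root ((Polynomial.X : Polynomial ℤ) ^ 2 + Polynomial.C (𝔇 : ℤ)))
  simp only [Polynomial.eval₂_add, Polynomial.eval₂_X_pow, Polynomial.eval₂_natCast, map_add,
    map_pow, map_natCast, map_zero] at h
  simp only [toRmod, Int.cast_zero, Int.cast_one, zero_add, one_mul]
  exact eq_neg_of_add_eq_zero_left h

theorem Rmod.natCast_self : (p : Rmod 𝔇 p) = 0 :=
  Ideal.Quotient.eq_zero_iff_mem.mpr (Ideal.subset_span rfl)

noncomputable def Rmod.toZModSqrtNeg : Rmod 𝔇 p →+* ZModSqrtNeg 𝔇 p :=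
  Ideal.Quotient.lift _
    (AdjoinRoot.lift (Int.castRingHom _) QuadraticAlgebra.omega (by ext <;> simp [sq]))
    (by
      intro a ha
      obtain ⟨c, rfl⟩ := Ideal.mem_span_singleton'.mp ha
      simp only [map_mul, map_natCast]
      ext <;> simp)

instance [Fact (1 < p)] : Nontrivial (Rmod 𝔇 p) := (Rmod.toZModSqrtNeg 𝔇 p).domain_nontrivial

instance [Fact p.Prime] : CharP (Rmod 𝔇 p) p :=
  (CharP.charP_iff_prime_eq_zero Fact.out).mpr (Rmod.natCast_self 𝔇 p)

variable {𝔇 p} [Fact p.Prime]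

theorem toRmod_val (w : ZModSqrtNeg 𝔇 p) :
    toRmod 𝔇 p w.re.val w.im.val
      = ZMod.castHom dvd_rfl _ w.re + ZMod.castHom dvd_rfl _ w.im * toRmod 𝔇 p 0 1 := by
  rw [toRmod_eq]
  simp only [ZMod.natCast_val, ZMod.intCast_cast, ZMod.castHom_apply]

theorem isUnit_toRmod_val {w : ZModSqrtNeg 𝔇 p} (hw : QuadraticAlgebra.norm w ≠ 0) :
    IsUnit (toRmod 𝔇 p w.re.val w.im.val) := by
  set κ := ZMod.castHom (dvd_rfl (a := p)) (Rmod 𝔇 p)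
  -- the inverse is the conjugate `w.re − w.im √−𝔇` divided by the norm
  refine IsUnit.of_mul_eq_one
    (κ (QuadraticAlgebra.norm w)⁻¹ * (κ w.re - κ w.im * toRmod 𝔇 p 0 1)) ?_
  have hκ : κ (QuadraticAlgebra.norm w)⁻¹ * κ (QuadraticAlgebra.norm w) = 1 := by
    rw [← map_mul, inv_mul_cancel₀ hw, map_one]
  have hN : κ (QuadraticAlgebra.norm w) = κ w.re ^ 2 + 𝔇 * κ w.im ^ 2 := by
    simp only [QuadraticAlgebra.norm_def, map_add, map_sub, map_mul, map_neg, map_natCast,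
      map_zero]
    ring
  rw [toRmod_val]
  linear_combination hκ - κ (QuadraticAlgebra.norm w)⁻¹ * hN
    - κ (QuadraticAlgebra.norm w)⁻¹ * κ w.im ^ 2 * toRmod_zero_one_sq 𝔇 p

end Rmod

def quadrupleEquiv (𝔇 p : ℕ) :
    (ZMod p × ZMod p × ZMod p × ZMod p) ≃ ZModSqrtNeg 𝔇 p × ZModSqrtNeg 𝔇 p where
  toFun v := (⟨v.1, v.2.1⟩, ⟨v.2.2.1, v.2.2.2⟩)
  invFun w := (w.1.re, w.1.im, w.2.re, w.2.im)
  left_inv _ := rfl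
  right_inv _ := rfl

theorem quadCongr_iff (𝔇 p : ℕ) (x y n : ℤ) (v : ZMod p × ZMod p × ZMod p × ZMod p) :
    QuadCongr 𝔇 p x y n v ↔
      QuadraticAlgebra.norm (quadrupleEquiv 𝔇 p v).1
        + QuadraticAlgebra.norm ((quadrupleEquiv 𝔇 p v).1 * ⟨x, y⟩ + (quadrupleEquiv 𝔇 p v).2)
        = n := by
  unfold QuadCongr
  convert Iff.rfl using 2
  simp only [quadrupleEquiv, Equiv.coe_fn_mk, QuadraticAlgebra.norm_def, QuadraticAlgebra.mk_mul_mk,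
    QuadraticAlgebra.re_add, QuadraticAlgebra.im_add]
  ring

section Unimodular

variable {𝔇 p : ℕ} [Fact p.Prime] [Fact (∀ r : ZMod p, r ^ 2 ≠ -(𝔇 : ZMod p) + 0 * r)]

theorem isUnimodular_iff_ne_zero (v : ZMod p × ZMod p × ZMod p × ZMod p) :
    IsUnimodular 𝔇 p v ↔ v ≠ 0 := by
  constructor
  · rintro ⟨a, b, h⟩ rfl
    simp [toRmod] at h
  · intro hv
    by_cases hd : (⟨v.2.2.1, v.2.2.2⟩ : ZModSqrtNeg 𝔇 p) = 0
    · have hc : (⟨v.1, v.2.1⟩ : ZModSqrtNeg 𝔇 p) ≠ 0 := fun hc =>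
        hv ((quadrupleEquiv 𝔇 p).injective (Prod.ext hc hd))
      obtain ⟨b, hb⟩ :=
        (isUnit_toRmod_val (QuadraticAlgebra.norm_eq_zero_iff_eq_zero.not.mpr hc)).exists_left_inv
      exact ⟨0, -b, by linear_combination hb⟩
    · obtain ⟨a, ha⟩ :=
        (isUnit_toRmod_val (QuadraticAlgebra.norm_eq_zero_iff_eq_zero.not.mpr hd)).exists_left_inv
      exact ⟨a, 0, by linear_combination ha⟩

theorem isUnimodular_and_quadCongr_iff (x y : ℤ) {n : ℤ} (hn : (n : ZMod p) = 0)
    (v : ZMod p × ZMod p × ZMod p × ZMod p) :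
    IsUnimodular 𝔇 p v ∧ QuadCongr 𝔇 p x y n v ↔
      (quadrupleEquiv 𝔇 p v).1 ≠ 0 ∧
        QuadraticAlgebra.norm (quadrupleEquiv 𝔇 p v).1
          + QuadraticAlgebra.norm ((quadrupleEquiv 𝔇 p v).1 * ⟨x, y⟩ + (quadrupleEquiv 𝔇 p v).2)
          = 0 := by
  rw [isUnimodular_iff_ne_zero, quadCongr_iff, hn]
  refine and_congr_left fun h => ⟨fun hv hc => hv ?_, fun hc hv => hc (by subst hv; rfl)⟩
  rw [hc, QuadraticAlgebra.norm_zero, zero_mul, zero_add, zero_add,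
    QuadraticAlgebra.norm_eq_zero_iff_eq_zero] at h
  exact (quadrupleEquiv 𝔇 p).injective (Prod.ext hc h)

end Unimodular

theorem Nat.cube_add_sq_sub_sub_one (p : ℕ) : p ^ 3 + p ^ 2 - p - 1 = (p + 1) * (p ^ 2 - 1) := by
  obtain rfl | hp := p.eq_zero_or_pos
  · rfl
  have key : p ^ 3 + p ^ 2 = (p + 1) * (p ^ 2 - 1) + p + 1 := by
    zify [Nat.one_le_pow 2 p hp]
    ring
  omega

theorem unimodular_solution_count_div_general (𝔇 : ℕ) (p : ℕ) (hp : p.Prime)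
    (hns : ¬ IsSquare (-(𝔇 : ZMod p)))
    (x y n : ℤ) (hn : (p : ℤ) ∣ n) :
    Nat.card {v : ZMod p × ZMod p × ZMod p × ZMod p //
        IsUnimodular 𝔇 p v ∧ QuadCongr 𝔇 p x y n v} = (p + 1) * (p ^ 2 - 1) ∧
    p ^ 3 + p ^ 2 - p - 1 = (p + 1) * (p ^ 2 - 1) ∧
    (Nat.card {v : ZMod p × ZMod p × ZMod p × ZMod p //
        IsUnimodular 𝔇 p v ∧ QuadCongr 𝔇 p x y n v} : ℚ) / ((p : ℚ) ^ 4 - 1)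
      = ((p : ℚ) + 1) / ((p : ℚ) ^ 2 + 1) := by
  have := Fact.mk hp
  have : Fact (∀ r : ZMod p, r ^ 2 ≠ -(𝔇 : ZMod p) + 0 * r) :=
    ⟨fun r hr => hns ⟨r, by linear_combination -hr⟩⟩
  have hcount : Nat.card {v : ZMod p × ZMod p × ZMod p × ZMod p //
      IsUnimodular 𝔇 p v ∧ QuadCongr 𝔇 p x y n v} = (p + 1) * (p ^ 2 - 1) := by
    rw [Nat.card_congr ((quadrupleEquiv 𝔇 p).subtypeEquiv
      (q := fun w => w.1 ≠ 0 ∧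
        QuadraticAlgebra.norm w.1 + QuadraticAlgebra.norm (w.1 * ⟨x, y⟩ + w.2) = 0)
      (isUnimodular_and_quadCongr_iff x y ((ZMod.intCast_zmod_eq_zero_iff_dvd n p).mpr hn))),
      Nat.card_eq_fintype_card, Fintype.card_subtype,
      QuadraticAlgebra.card_norm_add_norm_mul_add_eq_zero, ZMod.card, mul_comm]
  refine ⟨hcount, Nat.cube_add_sq_sub_sub_one p, ?_⟩
  have hp4 : (p : ℚ) ^ 4 - 1 ≠ 0 :=
    sub_ne_zero.mpr (one_lt_pow₀ (by exact_mod_cast hp.one_lt) four_ne_zero).ne'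
  rw [hcount, div_eq_div_iff hp4 (by positivity)]
  push_cast [Nat.one_le_pow 2 p hp.pos]
  ring

/-- For `𝔇 ≥ 1`, an odd prime `p ∤ 𝔇` with `−𝔇` not a square mod `p`, and integers
`x, y, n` with `p ∣ n`: the number of unimodular quadruples in `(ℤ/pℤ)⁴` satisfying the
congruence `A x² + B y² + C x + D y + E ≡ n (mod p)` equals
`p³ + p² − p − 1 = (p + 1)(p² − 1)`, and this count divided by the total number `p⁴ − 1`
of unimodular pairs equals `(p + 1)/(p² + 1)`. -/
theorem unimodular_solution_count_div (𝔇 : ℕ) (h𝔇 : 1 ≤ 𝔇) (p : ℕ) (hp : p.Prime)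
    (hodd : Odd p) (hpD : ¬ p ∣ 𝔇) (hns : ¬ IsSquare (-(𝔇 : ZMod p)))
    (x y n : ℤ) (hn : (p : ℤ) ∣ n) :
    Nat.card {v : ZMod p × ZMod p × ZMod p × ZMod p //
        IsUnimodular 𝔇 p v ∧ QuadCongr 𝔇 p x y n v} = (p + 1) * (p ^ 2 - 1) ∧
    p ^ 3 + p ^ 2 - p - 1 = (p + 1) * (p ^ 2 - 1) ∧
    (Nat.card {v : ZMod p × ZMod p × ZMod p × ZMod p //
        IsUnimodular 𝔇 p v ∧ QuadCongr 𝔇 p x y n v} : ℚ) / ((p : ℚ) ^ 4 - 1)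
      = ((p : ℚ) + 1) / ((p : ℚ) ^ 2 + 1) :=
  unimodular_solution_count_div_general 𝔇 p hp hns x y n hn
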